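/- arXiv:2101.03657 — 4 statements merged into one kernel-verified Lean document; each statement's English description precedes it below -/
import Mathlib

section
/- Let 0 ≤ β < 1/2, let (F_n)_{n≥0} be a filtration on a probability space, and let (D_n)_{n≥0} be an (F_n)-adapted process with values in the nonnegative integers such that D_0 = k almost surely for a fixed integer k ≥ 0, and such that for every n, on the event {T > n} (where T = inf{m ≥ 0 : D_m = 0}) one has D_{n+1} ∈ {D_n - 1, D_n + 1} almost surely and P(D_{n+1} = D_n - 1 | F_n) ≥ 1 - β almost surely. Then the hitting time T of 0 is almost surely finite and satisfies E[T] ≤ k/(1-2β). -/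
/-!
Let `X n = D (min n T)` be the walk stopped at `T`. On `{n < T}` it steps down with conditional
probability at least `1 - β` and up otherwise, so `E[X (n+1)] + (1 - 2β) P(n < T) ≤ E[X n]`.
As `X ≥ 0` and `X 0 = k`, summing over `n` gives `(1 - 2β) ∑ₙ P(n < T) ≤ k`, and the tail sum
`∑ₙ P(n < T)` is `E[T]`; in particular `T` is a.s. finite.
-/

open MeasureTheory ProbabilityTheory ENNReal

theorem ENat.toENNReal_eq_tsum_ite (a : ℕ∞) :
    (a : ℝ≥0∞) = ∑' n : ℕ, if (n : ℕ∞) < a then 1 else 0 := by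
  induction a using ENat.recTopCoe with
  | top => simp
  | coe m =>
    rw [tsum_eq_sum (s := Finset.range m)]
    · simp [Finset.filter_true_of_mem fun _ => Finset.mem_range.mp]
    · intro n hn
      simp_all

theorem ENat.natCast_lt_iInf_natCast_iff {P : ℕ → Prop} {n : ℕ} :
    (n : ℕ∞) < ⨅ (m : ℕ) (_ : P m), (m : ℕ∞) ↔ ∀ m ≤ n, ¬ P m := by
  rw [← ENat.add_one_le_iff (ENat.natCast_ne_top n)]
  simp only [le_iInf_iff]
  norm_cast
  exact ⟨fun h m hmn hm => by have := h m hm; omega,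
    fun h m hm => by by_contra! hlt; exact h m (by omega) hm⟩

theorem ENNReal.tsum_le_of_succ_add_le {u a : ℕ → ℝ≥0∞} (h : ∀ n, u (n + 1) + a n ≤ u n) :
    ∑' n, a n ≤ u 0 := by
  have hsum : ∀ N, u N + ∑ n ∈ Finset.range N, a n ≤ u 0 := by
    intro N
    induction N with
    | zero => simp
    | succ N ih =>
      calc u (N + 1) + ∑ n ∈ Finset.range (N + 1), a n
          = (u (N + 1) + a N) + ∑ n ∈ Finset.range N, a n := by
            rw [Finset.sum_range_succ]; ring
        _ ≤ u 0 := (add_le_add_left (h N) _).trans ih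
  exact ENNReal.tsum_le_of_sum_range_le fun N => le_add_self.trans (hsum N)

section

variable {Ω : Type*} {m0 : MeasurableSpace Ω} {μ : Measure Ω}

theorem ENat.toENNReal_comp_eq_tsum_indicator (T : Ω → ℕ∞) :
    (fun ω => (T ω : ℝ≥0∞)) = fun ω => ∑' n : ℕ, {ω | (n : ℕ∞) < T ω}.indicator 1 ω := by
  ext ω
  simp only [Set.indicator_apply, Set.mem_ofPred_eq, Pi.one_apply]
  exact ENat.toENNReal_eq_tsum_ite _

theorem lintegral_toENNReal_eq_tsum_measure_lt {T : Ω → ℕ∞}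
    (hT : ∀ n : ℕ, MeasurableSet {ω | (n : ℕ∞) < T ω}) :
    ∫⁻ ω, (T ω : ℝ≥0∞) ∂μ = ∑' n : ℕ, μ {ω | (n : ℕ∞) < T ω} := by
  rw [ENat.toENNReal_comp_eq_tsum_indicator,
    lintegral_tsum fun n => (measurable_one.indicator (hT n)).aemeasurable]
  exact tsum_congr fun n => lintegral_indicator_one (hT n)

theorem ae_lt_top_of_lintegral_toENNReal_ne_top {T : Ω → ℕ∞}
    (hT : ∀ n : ℕ, MeasurableSet {ω | (n : ℕ∞) < T ω})
    (hint : ∫⁻ ω, (T ω : ℝ≥0∞) ∂μ ≠ ⊤) : ∀ᵐ ω ∂μ, T ω < ⊤ := by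
  have hmeas : Measurable fun ω => (T ω : ℝ≥0∞) := by
    rw [ENat.toENNReal_comp_eq_tsum_indicator]
    exact Measurable.tsum fun n => measurable_one.indicator (hT n)
  filter_upwards [ae_lt_top hmeas hint] with ω hω
  exact_mod_cast hω

theorem ofReal_mul_measure_le_measure_inter_of_le_condExp [IsFiniteMeasure μ]
    {m : MeasurableSpace Ω} (hm : m ≤ m0) {s A : Set Ω} (hs : MeasurableSet[m] s)
    (hA : MeasurableSet[m0] A) {p : ℝ}
    (hp : ∀ᵐ ω ∂μ, ω ∈ s → p ≤ (μ[A.indicator (fun _ => (1 : ℝ)) | m]) ω) :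
    ENNReal.ofReal p * μ s ≤ μ (A ∩ s) := by
  have hreal : p * μ.real s ≤ μ.real (A ∩ s) :=
    calc p * μ.real s = ∫ _ in s, p ∂μ := by simp [mul_comm]
      _ ≤ ∫ ω in s, (μ[A.indicator (fun _ => (1 : ℝ)) | m]) ω ∂μ := by
        refine setIntegral_mono_ae_restrict (integrable_const _).integrableOn
          integrable_condExp.integrableOn ?_
        rwa [Filter.EventuallyLE, ae_restrict_iff' (hm s hs)]
      _ = ∫ ω in s, A.indicator (fun _ => (1 : ℝ)) ω ∂μ :=
        setIntegral_condExp hm ((integrable_const 1).indicator hA) hs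
      _ = μ.real (A ∩ s) := by
        rw [integral_indicator_const _ hA, measureReal_restrict_apply hA]; simp
  calc ENNReal.ofReal p * μ s = ENNReal.ofReal (p * μ.real s) := by
        rw [ENNReal.ofReal_mul' measureReal_nonneg, ofReal_measureReal]
    _ ≤ ENNReal.ofReal (μ.real (A ∩ s)) := ENNReal.ofReal_le_ofReal hreal
    _ = μ (A ∩ s) := ofReal_measureReal

variable {D : ℕ → Ω → ℕ} {T : Ω → ℕ∞} {n : ℕ}

theorem stoppedProcess_succ_add_le {ω : Ω} (hpos : (n : ℕ∞) < T ω → D n ω ≠ 0)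
    (hstep : (n : ℕ∞) < T ω → D (n + 1) ω = D n ω - 1 ∨ D (n + 1) ω = D n ω + 1) :
    ((stoppedProcess D T (n + 1) ω : ℕ) : ℝ≥0∞)
        + 2 * ({ω | D (n + 1) ω = D n ω - 1} ∩ {ω | (n : ℕ∞) < T ω}).indicator 1 ω
      ≤ (stoppedProcess D T n ω : ℕ) + {ω | (n : ℕ∞) < T ω}.indicator 1 ω := by
  by_cases hlt : (n : ℕ∞) < T ω
  · have hsucc : ((n + 1 : ℕ) : ℕ∞) ≤ T ω := Order.add_one_le_of_lt hlt
    rw [stoppedProcess_eq_of_le hsucc, stoppedProcess_eq_of_le hlt.le]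
    have hD := hpos hlt
    simp only [Set.indicator_apply, Set.mem_inter_iff, Set.mem_ofPred_eq, hlt, and_true,
      if_true, Pi.one_apply]
    rcases hstep hlt with hdown | hup
    · rw [if_pos hdown, hdown]
      exact_mod_cast (by omega : D n ω - 1 + 2 * 1 ≤ D n ω + 1)
    · rw [if_neg (by omega), hup]
      simp
  · have hle : T ω ≤ n := not_lt.mp hlt
    rw [stoppedProcess_eq_of_ge hle,
      stoppedProcess_eq_of_ge (hle.trans (WithTop.coe_le_coe.mpr n.le_succ))]
    simp [Set.indicator_of_notMem, hlt]

theorem measurableSet_natCast_lt_hittingTime {F : Filtration ℕ m0} (hD : Adapted F D)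
    (hT : ∀ ω, T ω = ⨅ (m : ℕ) (_ : D m ω = 0), (m : ℕ∞)) (n : ℕ) :
    MeasurableSet[F n] {ω | (n : ℕ∞) < T ω} := by
  have hset : {ω | (n : ℕ∞) < T ω} = ⋂ m, ⋂ (_ : m ≤ n), {ω | D m ω ≠ 0} := by
    ext ω
    simp [hT, ENat.natCast_lt_iInf_natCast_iff]
  rw [hset]
  exact .iInter fun m => .iInter fun hmn =>
    ((hD m).mono (F.mono hmn) le_rfl (measurableSet_singleton 0)).compl

theorem lintegral_stoppedProcess_succ_add_le [IsFiniteMeasure μ] {F : Filtration ℕ m0}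
    (hD : ∀ i, Measurable (D i)) (hT : MeasurableSet[F n] {ω | (n : ℕ∞) < T ω})
    {β : ℝ} (hβ : β ≤ 1 / 2) (hpos : ∀ ω, (n : ℕ∞) < T ω → D n ω ≠ 0)
    (hstep : ∀ᵐ ω ∂μ, (n : ℕ∞) < T ω → D (n + 1) ω = D n ω - 1 ∨ D (n + 1) ω = D n ω + 1)
    (hcond : ∀ᵐ ω ∂μ, (n : ℕ∞) < T ω →
      1 - β ≤ (μ[{ω' | D (n + 1) ω' = D n ω' - 1}.indicator (fun _ => (1 : ℝ)) | F n]) ω) :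
    ∫⁻ ω, ((stoppedProcess D T (n + 1) ω : ℕ) : ℝ≥0∞) ∂μ
        + ENNReal.ofReal (1 - 2 * β) * μ {ω | (n : ℕ∞) < T ω}
      ≤ ∫⁻ ω, ((stoppedProcess D T n ω : ℕ) : ℝ≥0∞) ∂μ := by
  have hA : MeasurableSet {ω | D (n + 1) ω = D n ω - 1} :=
    measurableSet_eq_fun (hD (n + 1)) ((hD n).sub_const 1)
  have hB : MeasurableSet {ω | (n : ℕ∞) < T ω} := F.le n _ hT
  have hpath := lintegral_mono_ae (μ := μ) <| hstep.mono fun ω hω =>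
    stoppedProcess_succ_add_le (hpos ω) hω
  rw [lintegral_add_right _ ((measurable_one.indicator (hA.inter hB)).const_mul 2),
    lintegral_add_right _ (measurable_one.indicator hB), lintegral_const_mul _
    (measurable_one.indicator (hA.inter hB)), lintegral_indicator_one (hA.inter hB),
    lintegral_indicator_one hB] at hpath
  have hdown := ofReal_mul_measure_le_measure_inter_of_le_condExp (F.le n) hT hA hcond
  have hcoef : ENNReal.ofReal (1 - 2 * β) + 1 = 2 * ENNReal.ofReal (1 - β) := by
    rw [← ENNReal.ofReal_one, ← ENNReal.ofReal_add (by linarith) zero_le_one,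
      ← ENNReal.ofReal_ofNat 2, ← ENNReal.ofReal_mul (by norm_num)]
    congr 1
    ring
  refine (ENNReal.add_le_add_iff_right (measure_ne_top μ {ω | (n : ℕ∞) < T ω})).mp ?_
  calc _ = ∫⁻ ω, ((stoppedProcess D T (n + 1) ω : ℕ) : ℝ≥0∞) ∂μ
          + 2 * (ENNReal.ofReal (1 - β) * μ {ω | (n : ℕ∞) < T ω}) := by
        rw [add_assoc, ← mul_assoc, ← hcoef, add_mul, one_mul]
    _ ≤ _ := le_trans (by gcongr) hpath

end

theorem supermartingale_walk_hitting_time_bound_general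
    {Ω : Type*} {m0 : MeasurableSpace Ω} (μ : Measure Ω) [IsProbabilityMeasure μ]
    (β : ℝ) (hβ : β < 1 / 2)
    (F : Filtration ℕ m0)
    (D : ℕ → Ω → ℕ) (hadapted : Adapted F D)
    (k : ℕ) (hD0 : ∀ᵐ ω ∂μ, D 0 ω = k)
    (T : Ω → ℕ∞)
    (hT : ∀ ω, T ω = ⨅ (m : ℕ) (_ : D m ω = 0), (m : ℕ∞))
    (hstep : ∀ n : ℕ, ∀ᵐ ω ∂μ, (n : ℕ∞) < T ω →
      (D (n + 1) ω = D n ω - 1 ∨ D (n + 1) ω = D n ω + 1))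
    (hcond : ∀ n : ℕ, ∀ᵐ ω ∂μ, (n : ℕ∞) < T ω →
      1 - β ≤ (μ[Set.indicator {ω' | D (n + 1) ω' = D n ω' - 1}
        (fun _ => (1 : ℝ)) | F n]) ω) :
    (∀ᵐ ω ∂μ, T ω < ⊤) ∧
      ∫⁻ ω, (T ω : ℝ≥0∞) ∂μ ≤ ENNReal.ofReal (k / (1 - 2 * β)) := by
  have hdrift_pos : 0 < 1 - 2 * β := by linarith
  have hB (n : ℕ) := measurableSet_natCast_lt_hittingTime hadapted hT n
  have hpos (n : ℕ) ω (h : (n : ℕ∞) < T ω) : D n ω ≠ 0 :=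
    ENat.natCast_lt_iInf_natCast_iff.mp (hT ω ▸ h) n le_rfl
  have hstart : ∫⁻ ω, ((stoppedProcess D T 0 ω : ℕ) : ℝ≥0∞) ∂μ = k := by
    have hX0 : ∀ᵐ ω ∂μ, ((stoppedProcess D T 0 ω : ℕ) : ℝ≥0∞) = k :=
      hD0.mono fun ω h => by
        rw [show stoppedProcess D T 0 ω = D 0 ω from stoppedProcess_eq_of_le bot_le, h]
    rw [lintegral_congr_ae hX0, lintegral_const, measure_univ, mul_one]
  have hbound : ENNReal.ofReal (1 - 2 * β) * ∫⁻ ω, (T ω : ℝ≥0∞) ∂μ ≤ k := by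
    rw [lintegral_toENNReal_eq_tsum_measure_lt fun n => F.le n _ (hB n), ← ENNReal.tsum_mul_left,
      ← hstart]
    exact ENNReal.tsum_le_of_succ_add_le fun n => lintegral_stoppedProcess_succ_add_le
      (fun i => (hadapted i).mono (F.le i) le_rfl) (hB n) hβ.le (hpos n) (hstep n) (hcond n)
  have hmean : ∫⁻ ω, (T ω : ℝ≥0∞) ∂μ ≤ ENNReal.ofReal (k / (1 - 2 * β)) := by
    rw [ENNReal.ofReal_div_of_pos hdrift_pos, ofReal_natCast,
      ENNReal.le_div_iff_mul_le (.inl (by simpa using hdrift_pos)) (.inl ofReal_ne_top), mul_comm]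
    exact hbound
  exact ⟨ae_lt_top_of_lintegral_toENNReal_ne_top (fun n => F.le n _ (hB n))
    (ne_top_of_le_ne_top ofReal_ne_top hmean), hmean⟩

/-- An adapted nonnegative-integer-valued process started at `k` that, while
positive, moves by `±1` and steps down with conditional probability at least `1 - β`
(for `β < 1/2`), hits `0` in almost surely finite time `T` with `E[T] ≤ k / (1 - 2β)`. -/
theorem supermartingale_walk_hitting_time_bound
    {Ω : Type*} {m0 : MeasurableSpace Ω} (μ : Measure Ω) [IsProbabilityMeasure μ]
    (β : ℝ) (hβ0 : 0 ≤ β) (hβ : β < 1 / 2)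
    (F : Filtration ℕ m0)
    (D : ℕ → Ω → ℕ) (hadapted : Adapted F D)
    (k : ℕ) (hD0 : ∀ᵐ ω ∂μ, D 0 ω = k)
    (T : Ω → ℕ∞)
    (hT : ∀ ω, T ω = ⨅ (m : ℕ) (_ : D m ω = 0), (m : ℕ∞))
    (hstep : ∀ n : ℕ, ∀ᵐ ω ∂μ, (n : ℕ∞) < T ω →
      (D (n + 1) ω = D n ω - 1 ∨ D (n + 1) ω = D n ω + 1))
    (hcond : ∀ n : ℕ, ∀ᵐ ω ∂μ, (n : ℕ∞) < T ω →
      1 - β ≤ (μ[Set.indicator {ω' | D (n + 1) ω' = D n ω' - 1}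
        (fun _ => (1 : ℝ)) | F n]) ω) :
    (∀ᵐ ω ∂μ, T ω < ⊤) ∧
      ∫⁻ ω, (T ω : ℝ≥0∞) ∂μ ≤ ENNReal.ofReal (k / (1 - 2 * β)) :=
  supermartingale_walk_hitting_time_bound_general μ β hβ F D hadapted k hD0 T hT hstep hcond
end

section
/- Let S be a finite set, K : S × S → ℝ a rate matrix, and s_f ∈ S a target state such that s_f is reachable from every state s ∈ S \ {s_f} (there is a finite sequence s = s_0, s_1, …, s_m = s_f with K(s_i, s_{i+1}) > 0 for each i). Let Q be the generator of K and let Q̃ be the square submatrix of Q obtained by deleting the row and the column indexed by s_f. Then Q̃ is nonsingular; consequently the mean first passage time system Q̃ t = -1 (where 1 is the all-ones vector indexed by S \ {s_f}) has a unique solution t. -/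
/-- If the target state `sf` is reachable from every other state via
positive-rate transitions, then the submatrix `Q̃` of the generator `Q` obtained by
deleting the row and column of `sf` is nonsingular, and the mean first passage time
system `Q̃ t = -1` has a unique solution. -/
theorem mfpt_matrix_nonsingular
    {S : Type*} [Fintype S] [DecidableEq S]
    (K : S → S → ℝ)
    (hKnonneg : ∀ s s', 0 ≤ K s s')
    (hKdiag : ∀ s, K s s = 0)
    (sf : S)
    (hreach : ∀ s, s ≠ sf → ∃ (m : ℕ) (p : ℕ → S), p 0 = s ∧ p m = sf ∧
      ∀ i < m, 0 < K (p i) (p (i + 1)))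
    (Q : S → S → ℝ)
    (hQ : ∀ s s', Q s s' =
      if s = s' then -∑ s'' ∈ Finset.univ.erase s, K s s'' else K s s')
    (Qt : Matrix {s : S // s ≠ sf} {s : S // s ≠ sf} ℝ)
    (hQt : ∀ a b, Qt a b = Q a b) :
    IsUnit Qt.det ∧
      ∃! t : {s : S // s ≠ sf} → ℝ, Qt.mulVec t = fun _ => -1 := by
  -- Abbreviation
  let T := {s : S // s ≠ sf}
  -- diagonal sum
  have hDsplit : ∀ a : T, (∑ s'' ∈ Finset.univ.erase a.val, K a.val s'')
      = K a.val sf + ∑ b : T, K a.val b.val := by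
    intro a
    have h1 : (∑ s'' ∈ Finset.univ.erase a.val, K a.val s'') = ∑ s'' : S, K a.val s'' :=
      Finset.sum_erase _ (hKdiag a.val)
    have h2 : (∑ s'' : S, K a.val s'') = K a.val sf + ∑ s'' ∈ Finset.univ.erase sf, K a.val s'' :=
      (Finset.add_sum_erase _ _ (Finset.mem_univ sf)).symm
    have h3 : (∑ s'' ∈ Finset.univ.erase sf, K a.val s'') = ∑ b : T, K a.val b.val := by
      apply Finset.sum_subtype
      intro x
      simp [Finset.mem_erase]
    rw [h1, h2, h3]
  -- kernel is trivial
  have hker : ∀ t : T → ℝ, Qt.mulVec t = 0 → t = 0 := by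
    intro t ht
    by_contra hne
    obtain ⟨a1, ha1⟩ := Function.ne_iff.mp hne
    obtain ⟨a0, -, ha0⟩ := Finset.exists_max_image Finset.univ (fun b : T => |t b|)
      ⟨a1, Finset.mem_univ a1⟩
    set M := |t a0| with hM
    have hble : ∀ b : T, |t b| ≤ M := fun b => ha0 b (Finset.mem_univ b)
    have hMpos : 0 < M := lt_of_lt_of_le (abs_pos.mpr (by simpa using ha1)) (hble a1)
    -- row equation
    have hrow : ∀ a : T,
        (∑ s'' ∈ Finset.univ.erase a.val, K a.val s'') * t a
          = ∑ b : T, K a.val b.val * t b := by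
      intro a
      have h0 : ∑ b : T, Qt a b * t b = 0 := congrFun ht a
      have h1 : ∀ b : T, Qt a b * t b
          = (if a = b then (-(∑ s'' ∈ Finset.univ.erase a.val, K a.val s'')) * t b else 0)
            + K a.val b.val * t b := by
        intro b
        rw [hQt, hQ]
        by_cases hab : a = b
        · subst hab
          simp [hKdiag]
        · have : (a : S) ≠ (b : S) := fun h => hab (Subtype.ext h)
          simp [hab, this]
      rw [Finset.sum_congr rfl (fun b _ => h1 b), Finset.sum_add_distrib,
        Finset.sum_ite_eq] at h0
      simp only [Finset.mem_univ, if_true] at h0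
      linarith
    -- maximal states: no escape to sf and neighbors also maximal
    have hA : ∀ a : T, |t a| = M →
        K a.val sf = 0 ∧ ∀ b : T, 0 < K a.val b.val → |t b| = M := by
      intro a ha
      have hD : ∀ x : ℝ, x = x := fun _ => rfl
      set D := ∑ s'' ∈ Finset.univ.erase a.val, K a.val s'' with hDdef
      have hDnn : 0 ≤ D := Finset.sum_nonneg fun i _ => hKnonneg _ _
      have habs : D * M ≤ ∑ b : T, K a.val b.val * |t b| := by
        have := hrow a
        calc D * M = |D * t a| := by rw [abs_mul, abs_of_nonneg hDnn, ha]
        _ = |∑ b : T, K a.val b.val * t b| := by rw [this]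
        _ ≤ ∑ b : T, |K a.val b.val * t b| := Finset.abs_sum_le_sum_abs _ _
        _ = ∑ b : T, K a.val b.val * |t b| := by
            refine Finset.sum_congr rfl fun b _ => ?_
            rw [abs_mul, abs_of_nonneg (hKnonneg _ _)]
      have hub : ∑ b : T, K a.val b.val * |t b| ≤ ∑ b : T, K a.val b.val * M :=
        Finset.sum_le_sum fun b _ => mul_le_mul_of_nonneg_left (hble b) (hKnonneg _ _)
      have hsum : (∑ b : T, K a.val b.val * M) = (D - K a.val sf) * M := by
        rw [hDdef, hDsplit a, add_sub_cancel_left, Finset.sum_mul]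
      have hKsf : K a.val sf = 0 := by
        have h1 : D * M ≤ (D - K a.val sf) * M := le_trans habs (hsum ▸ hub)
        nlinarith [hKnonneg a.val sf]
      constructor
      · exact hKsf
      · -- all inequalities are equalities
        have heq : ∑ b : T, K a.val b.val * (M - |t b|) = 0 := by
          have h1 : (∑ b : T, K a.val b.val * M) = D * M := by
            rw [hsum, hKsf]; ring
          have h2 : ∑ b : T, K a.val b.val * (M - |t b|)
              = (∑ b : T, K a.val b.val * M) - ∑ b : T, K a.val b.val * |t b| := by
            rw [← Finset.sum_sub_distrib]
            exact Finset.sum_congr rfl fun b _ => by ring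
          rw [h2, h1]
          linarith
        intro b hb
        have hz := (Finset.sum_eq_zero_iff_of_nonneg
          (fun b _ => mul_nonneg (hKnonneg _ _) (by linarith [hble b]))).mp heq b
          (Finset.mem_univ b)
        have : M - |t b| = 0 := by
          rcases mul_eq_zero.mp hz with h | h
          · exact absurd h (ne_of_gt hb)
          · exact h
        linarith
    -- follow a path from a0 to sf
    obtain ⟨m, p, hp0, hpm, hstep⟩ := hreach a0.val a0.prop
    have key : ∀ i, i ≤ m → ∃ h : p i ≠ sf, |t ⟨p i, h⟩| = M := by
      intro i
      induction i with
      | zero =>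
        intro _
        refine ⟨hp0 ▸ a0.prop, ?_⟩
        have : (⟨p 0, hp0 ▸ a0.prop⟩ : T) = a0 := Subtype.ext hp0
        rw [this]
      | succ i ih =>
        intro hi
        obtain ⟨h, hmem⟩ := ih (Nat.le_of_succ_le hi)
        have hk := hstep i (Nat.lt_of_succ_le hi)
        obtain ⟨hKsf, hnb⟩ := hA ⟨p i, h⟩ hmem
        have hne : p (i + 1) ≠ sf := by
          intro hEq
          rw [hEq] at hk
          exact absurd hKsf (ne_of_gt hk)
        exact ⟨hne, hnb ⟨p (i + 1), hne⟩ hk⟩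
    obtain ⟨h, -⟩ := key m le_rfl
    exact h hpm
  -- conclude
  have hdet : Qt.det ≠ 0 := by
    intro hd
    obtain ⟨v, hv, hv0⟩ := Matrix.exists_mulVec_eq_zero_iff.mpr hd
    exact hv (hker v hv0)
  have hunit : IsUnit Qt.det := isUnit_iff_ne_zero.mpr hdet
  refine ⟨hunit, ⟨Qt⁻¹.mulVec (fun _ => -1), ?_, ?_⟩⟩
  · show Qt.mulVec (Qt⁻¹.mulVec (fun _ => -1)) = fun _ => -1
    rw [Matrix.mulVec_mulVec, Matrix.mul_nonsing_inv _ hunit, Matrix.one_mulVec]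
  · intro t' ht'
    have h2 : Qt.mulVec (Qt⁻¹.mulVec (fun _ => -1)) = fun _ => -1 := by
      rw [Matrix.mulVec_mulVec, Matrix.mul_nonsing_inv _ hunit, Matrix.one_mulVec]
    have h3 : Qt.mulVec (t' - Qt⁻¹.mulVec (fun _ => -1)) = 0 := by
      rw [Matrix.mulVec_sub, ht', h2]
      simp
    have := hker _ h3
    have := sub_eq_zero.mp this
    exact this
end

section
/- Let S be a finite set, K : S × S → ℝ a rate matrix, and s_f ∈ S a target state reachable from every state s ∈ S \ {s_f} via a finite sequence of transitions with positive rates. Let Q̃ be the submatrix of the generator Q of K obtained by deleting the row and column of s_f, and let t be the unique solution of Q̃ t = -1. Then t is componentwise positive: t_s > 0 for every s ∈ S \ {s_f}. More generally, the matrix (-Q̃)^{-1} has all entries nonnegative. -/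
/-!
A minimum principle for `Q̃`. Suppose `Q̃ x ≤ 0` and `x` has a negative minimum `x a`. Then
`(Q̃ x) a = ∑ b, Q̃ a b * (x b - x a) + x a * ∑ b, Q̃ a b` is a sum of two nonnegative terms
(off-diagonal rates are nonnegative and the row sum `-K a sf` is nonpositive), so both vanish:
`K a sf = 0`, and every state entered from `a` with positive rate is again a minimiser.
Following a path from `a` towards `sf` we reach a minimiser with `K · sf > 0`, a contradiction.
Hence `Q̃ x ≤ 0` implies `x ≥ 0`. Applied to `t` this gives `t ≥ 0`, and `t s = 0` would force
`(Q̃ t) s ≥ 0`; applied to the columns of `(-Q̃)⁻¹`, which `Q̃` maps to `-eⱼ`, it gives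
`(-Q̃)⁻¹ ≥ 0`.
-/

open Finset Matrix Relation

namespace Matrix

variable {ι : Type*} [Fintype ι] {A : Matrix ι ι ℝ} {x : ι → ℝ}

theorem mulVec_apply_eq_sum_mul_sub_add (A : Matrix ι ι ℝ) (x : ι → ℝ) (a : ι) (m : ℝ) :
    (A *ᵥ x) a = ∑ b, A a b * (x b - m) + m * ∑ b, A a b := by
  simp only [mulVec, dotProduct, mul_sub, sum_sub_distrib, ← sum_mul]
  ring

theorem mulVec_apply_nonneg_of_apply_eq_zero (hoff : ∀ a b, a ≠ b → 0 ≤ A a b)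
    (hx : ∀ b, 0 ≤ x b) {a : ι} (ha : x a = 0) : 0 ≤ (A *ᵥ x) a := by
  refine sum_nonneg fun b _ => ?_
  rcases eq_or_ne a b with rfl | hab
  · simp [ha]
  · exact mul_nonneg (hoff a b hab) (hx b)

theorem row_sum_eq_zero_and_eq_of_isMin (hoff : ∀ a b, a ≠ b → 0 ≤ A a b) {a : ι}
    (hrow : ∑ b, A a b ≤ 0) (hmin : ∀ b, x a ≤ x b) (hneg : x a < 0)
    (hAx : (A *ᵥ x) a ≤ 0) :
    ∑ b, A a b = 0 ∧ ∀ b, a ≠ b → 0 < A a b → x b = x a := by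
  have hterm : ∀ b ∈ univ, 0 ≤ A a b * (x b - x a) := fun b _ => by
    rcases eq_or_ne a b with rfl | hab
    · simp
    · exact mul_nonneg (hoff a b hab) (sub_nonneg.2 (hmin b))
  have hdiag : 0 ≤ x a * ∑ b, A a b := mul_nonneg_of_nonpos_of_nonpos hneg.le hrow
  rw [mulVec_apply_eq_sum_mul_sub_add A x a (x a)] at hAx
  have hsum : ∑ b, A a b * (x b - x a) = 0 := le_antisymm (by linarith) (sum_nonneg hterm)
  refine ⟨(mul_eq_zero.1 (by linarith : x a * ∑ b, A a b = 0)).resolve_left hneg.ne, ?_⟩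
  intro b hab hpos
  have := (sum_eq_zero_iff_of_nonneg hterm).1 hsum b (mem_univ b)
  linarith [(mul_eq_zero.1 this).resolve_left hpos.ne']

theorem nonneg_of_mulVec_nonpos (hoff : ∀ a b, a ≠ b → 0 ≤ A a b)
    (hrow : ∀ a, ∑ b, A a b ≤ 0)
    (hchain : ∀ a, ∃ b, ReflTransGen (fun a b => a ≠ b ∧ 0 < A a b) a b ∧ ∑ c, A b c < 0)
    (hx : ∀ a, (A *ᵥ x) a ≤ 0) (a : ι) : 0 ≤ x a := by
  by_contra! hxa
  have : Nonempty ι := ⟨a⟩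
  obtain ⟨a₀, ha₀⟩ := Finite.exists_min x
  have hneg : x a₀ < 0 := (ha₀ a).trans_lt hxa
  have hstep := fun c (hc : x c = x a₀) =>
    row_sum_eq_zero_and_eq_of_isMin hoff (hrow c) (hc ▸ ha₀) (hc ▸ hneg) (hx c)
  have hclosed : ∀ b, ReflTransGen (fun a b => a ≠ b ∧ 0 < A a b) a₀ b → x b = x a₀ :=
    fun b hpath => by
      induction hpath with
      | refl => rfl
      | tail _ hcd ih => exact ((hstep _ ih).2 _ hcd.1 hcd.2).trans ih
  obtain ⟨b, hpath, hb⟩ := hchain a₀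
  exact hb.ne (hstep b (hclosed b hpath)).1

theorem inv_neg_nonneg_of_monotone [DecidableEq ι]
    (hmono : ∀ x : ι → ℝ, (∀ a, (A *ᵥ x) a ≤ 0) → ∀ a, 0 ≤ x a) (i j : ι) :
    0 ≤ (-A)⁻¹ i j := by
  by_cases hdet : IsUnit (-A).det
  · have hcol : A *ᵥ ((-A)⁻¹ *ᵥ Pi.single j 1) = -Pi.single j 1 := by
      rw [← neg_neg (A *ᵥ _), ← neg_mulVec, mulVec_mulVec, mul_nonsing_inv _ hdet, one_mulVec]
    have hsingle : (0 : ι → ℝ) ≤ Pi.single j 1 := Pi.single_nonneg.2 zero_le_one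
    have hcol_nonneg := hmono _ (fun a => by
      rw [hcol, Pi.neg_apply, neg_nonpos]
      exact hsingle a) i
    simpa [mulVec_single] using hcol_nonneg
  · simp [nonsing_inv_apply_not_isUnit _ hdet]

end Matrix

theorem Relation.reflTransGen_of_forall_lt_succ {α : Type*} {r : α → α → Prop} (p : ℕ → α)
    {m : ℕ} (h : ∀ i < m, r (p i) (p (i + 1))) : ReflTransGen r (p 0) (p m) :=
  (reflTransGen_of_succ_of_le (fun i j => r (p i) (p j)) (fun i hi => h i hi.2)
    (Nat.zero_le m)).lift p fun _ _ hij => hij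

section RateMatrix

variable {S : Type*} [Fintype S] [DecidableEq S] {K : S → S → ℝ} {sf : S}

def rateGenerator (K : S → S → ℝ) : Matrix S S ℝ :=
  Matrix.of fun s s' => if s = s' then -∑ s'' ∈ univ.erase s, K s s'' else K s s'

def reducedGenerator (K : S → S → ℝ) (sf : S) : Matrix {s // s ≠ sf} {s // s ≠ sf} ℝ :=
  (rateGenerator K).submatrix Subtype.val Subtype.val

theorem rateGenerator_apply_of_ne {s s' : S} (h : s ≠ s') : rateGenerator K s s' = K s s' := by
  simp [rateGenerator, h]

theorem sum_rateGenerator_row (K : S → S → ℝ) (s : S) : ∑ s', rateGenerator K s s' = 0 := by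
  rw [← add_sum_erase _ _ (mem_univ s),
    sum_congr rfl fun s' hs' => rateGenerator_apply_of_ne (ne_of_mem_erase hs').symm]
  simp [rateGenerator]

theorem reducedGenerator_apply_of_ne {a b : {s // s ≠ sf}} (h : a ≠ b) :
    reducedGenerator K sf a b = K a b :=
  rateGenerator_apply_of_ne (Subtype.val_injective.ne h)

theorem reducedGenerator_apply_nonneg_of_ne (hK : ∀ s s', 0 ≤ K s s') {a b : {s // s ≠ sf}}
    (h : a ≠ b) : 0 ≤ reducedGenerator K sf a b :=
  reducedGenerator_apply_of_ne h ▸ hK a b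

theorem sum_reducedGenerator_row (K : S → S → ℝ) (a : {s // s ≠ sf}) :
    ∑ b, reducedGenerator K sf a b = -K a sf := by
  have h := sum_rateGenerator_row K a
  rw [← add_sum_erase _ _ (mem_univ sf), sum_subtype (univ.erase sf) (p := (· ≠ sf)) (by simp),
    rateGenerator_apply_of_ne a.2] at h
  simp only [reducedGenerator, submatrix_apply]
  linarith

theorem exists_reflTransGen_reducedGenerator (hKdiag : ∀ s, K s s = 0) {s : S}
    (hpath : ReflTransGen (fun s s' => 0 < K s s') s sf) (hs : s ≠ sf) :
    ∃ b, ReflTransGen (fun a b => a ≠ b ∧ 0 < reducedGenerator K sf a b) ⟨s, hs⟩ b ∧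
      0 < K b sf := by
  induction hpath using ReflTransGen.head_induction_on with
  | refl => exact absurd rfl hs
  | @head s c hsc _ ih =>
    by_cases hc : c = sf
    · subst hc
      exact ⟨⟨s, hs⟩, .refl, hsc⟩
    · obtain ⟨b, hcb, hb⟩ := ih hc
      have hne : (⟨s, hs⟩ : {s // s ≠ sf}) ≠ ⟨c, hc⟩ := by
        rintro ⟨⟩
        exact (hKdiag s).not_gt hsc
      exact ⟨b, .head ⟨hne, (reducedGenerator_apply_of_ne hne).symm ▸ hsc⟩ hcb, hb⟩

theorem reducedGenerator_nonneg_of_mulVec_nonpos (hKnonneg : ∀ s s', 0 ≤ K s s')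
    (hKdiag : ∀ s, K s s = 0) (hreach : ∀ s, s ≠ sf → ReflTransGen (fun s s' => 0 < K s s') s sf)
    {x : {s // s ≠ sf} → ℝ} (hx : ∀ a, (reducedGenerator K sf *ᵥ x) a ≤ 0) (a : {s // s ≠ sf}) :
    0 ≤ x a := by
  refine nonneg_of_mulVec_nonpos (fun a b => reducedGenerator_apply_nonneg_of_ne hKnonneg)
    (fun a => ?_) (fun a => ?_) hx a
  · rw [sum_reducedGenerator_row, neg_nonpos]
    exact hKnonneg a sf
  · obtain ⟨b, hab, hb⟩ := exists_reflTransGen_reducedGenerator hKdiag (hreach a a.2) a.2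
    exact ⟨b, hab, by rwa [sum_reducedGenerator_row, neg_neg_iff_pos]⟩

end RateMatrix

/-- Under the reachability hypothesis, the mean first passage time vector
`t` solving `Q̃ t = -1` is componentwise positive, and the matrix `(-Q̃)⁻¹` has all
entries nonnegative. -/
theorem mfpt_vector_positive
    {S : Type*} [Fintype S] [DecidableEq S]
    (K : S → S → ℝ)
    (hKnonneg : ∀ s s', 0 ≤ K s s')
    (hKdiag : ∀ s, K s s = 0)
    (sf : S)
    (hreach : ∀ s, s ≠ sf → ∃ (m : ℕ) (p : ℕ → S), p 0 = s ∧ p m = sf ∧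
      ∀ i < m, 0 < K (p i) (p (i + 1)))
    (Q : S → S → ℝ)
    (hQ : ∀ s s', Q s s' =
      if s = s' then -∑ s'' ∈ Finset.univ.erase s, K s s'' else K s s')
    (Qt : Matrix {s : S // s ≠ sf} {s : S // s ≠ sf} ℝ)
    (hQt : ∀ a b, Qt a b = Q a b)
    (t : {s : S // s ≠ sf} → ℝ)
    (ht : Qt.mulVec t = fun _ => -1) :
    (∀ s, 0 < t s) ∧ (∀ i j, 0 ≤ (-Qt)⁻¹ i j) := by
  obtain rfl : Qt = reducedGenerator K sf := by
    ext a b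
    simp [hQt, hQ, reducedGenerator, rateGenerator]
  have hmono (x) := reducedGenerator_nonneg_of_mulVec_nonpos hKnonneg hKdiag (x := x)
    fun s hs => by
      obtain ⟨m, p, rfl, rfl, hp⟩ := hreach s hs
      exact Relation.reflTransGen_of_forall_lt_succ p hp
  have ht_nonneg := hmono t (by simp [ht])
  refine ⟨fun s => (ht_nonneg s).lt_of_ne' fun hts => ?_, inv_neg_nonneg_of_monotone hmono⟩
  have hrow_nonneg := mulVec_apply_nonneg_of_apply_eq_zero
    (fun a b => reducedGenerator_apply_nonneg_of_ne hKnonneg) ht_nonneg hts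
  rw [ht] at hrow_nonneg
  norm_num at hrow_nonneg
end

section
/- Let S be a finite set, Q : S × S → ℝ a CTMC generator matrix (nonnegative off-diagonal entries, rows summing to zero), and π_0 a probability distribution on S. For a subset S' ⊆ S, let Q_{S'} denote the principal submatrix of Q indexed by S' and let π_0^{S'} denote the restriction of π_0 to S'. Then for any nested subsets S_1 ⊆ S_2 ⊆ S and every t ≥ 0 and every s ∈ S_1, the truncated transient probabilities are monotone: ((π_0^{S_1})ᵀ e^{t Q_{S_1}})_s ≤ ((π_0^{S_2})ᵀ e^{t Q_{S_2}})_s ≤ (π_0ᵀ e^{tQ})_s. -/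
/-!
Since `Q` has nonnegative off-diagonal entries, `A := Q + c • 1` is entrywise nonnegative for
large `c`, and `exp Q = e^{-c} • exp A`; the same shift works for every principal submatrix.
Each power of a nonnegative matrix dominates the corresponding power of any principal
submatrix, because the paths counted by the submatrix power are among those counted by the full
power. Summing the exponential series, the exponential of a truncated generator is dominated
entrywise by the corresponding block of the full exponential, which is itself nonnegative, and
nonnegativity of `π₀` carries this over to the transient distributions.
-/

open NormedSpace Matrix
open scoped Nat

theorem Finset.sum_comp_le_sum_of_injective {α β M : Type*} [Fintype α] [Fintype β]
    [AddCommMonoid M] [PartialOrder M] [IsOrderedAddMonoid M]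
    {f : α → β} (hf : Function.Injective f) {g : β → M} (hg : ∀ b, 0 ≤ g b) :
    ∑ a, g (f a) ≤ ∑ b, g b :=
  (Finset.sum_map Finset.univ ⟨f, hf⟩ g).symm.trans_le (Finset.sum_le_univ_sum_of_nonneg hg)

namespace Matrix

variable {α β : Type*} [Fintype α] [DecidableEq α] [Fintype β] [DecidableEq β]

theorem submatrix_pow_apply_le {R : Type*} [Semiring R] [PartialOrder R] [IsOrderedRing R]
    {A : Matrix β β R} (hA : ∀ i j, 0 ≤ A i j) {f : α → β} (hf : Function.Injective f)
    (n : ℕ) (i j : α) : (A.submatrix f f ^ n) i j ≤ (A ^ n) (f i) (f j) := by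
  induction n generalizing j with
  | zero => rw [pow_zero, pow_zero, ← submatrix_one f hf, submatrix_apply]
  | succ n ih =>
    rw [pow_succ, pow_succ, mul_apply, mul_apply]
    calc ∑ k, (A.submatrix f f ^ n) i k * A (f k) (f j)
        ≤ ∑ k, (A ^ n) (f i) (f k) * A (f k) (f j) :=
          Finset.sum_le_sum fun k _ => mul_le_mul_of_nonneg_right (ih k) (hA _ _)
      _ ≤ ∑ k, (A ^ n) (f i) k * A k (f j) :=
          Finset.sum_comp_le_sum_of_injective hf (g := fun k => (A ^ n) (f i) k * A k (f j))
            fun k => mul_nonneg (pow_apply_nonneg hA n _ _) (hA _ _)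

theorem hasSum_exp_apply (M : Matrix β β ℝ) (i j : β) :
    HasSum (fun n : ℕ => (n !⁻¹ : ℝ) * (M ^ n) i j) (exp M i j) := by
  let : NormedRing (Matrix β β ℝ) := Matrix.linftyOpNormedRing
  let : NormedAlgebra ℝ (Matrix β β ℝ) := Matrix.linftyOpNormedAlgebra
  exact Pi.hasSum.1 (Pi.hasSum.1 (exp_series_hasSum_exp' (𝕂 := ℝ) M) i) j

theorem exp_apply_nonneg_of_nonneg {A : Matrix β β ℝ} (hA : ∀ i j, 0 ≤ A i j) (i j : β) :
    0 ≤ exp A i j :=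
  (hasSum_exp_apply A i j).nonneg fun n => mul_nonneg (by positivity) (pow_apply_nonneg hA n i j)

theorem exp_submatrix_apply_le_of_nonneg {A : Matrix β β ℝ} (hA : ∀ i j, 0 ≤ A i j)
    {f : α → β} (hf : Function.Injective f) (i j : α) :
    exp (A.submatrix f f) i j ≤ exp A (f i) (f j) :=
  hasSum_le (fun n => mul_le_mul_of_nonneg_left (submatrix_pow_apply_le hA hf n i j)
    (by positivity)) (hasSum_exp_apply _ i j) (hasSum_exp_apply A (f i) (f j))

theorem exp_add_smul_one (M : Matrix β β ℝ) (c : ℝ) :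
    exp (M + c • 1) = Real.exp c • exp M := by
  let : NormedRing (Matrix β β ℝ) := Matrix.linftyOpNormedRing
  let : NormedAlgebra ℝ (Matrix β β ℝ) := Matrix.linftyOpNormedAlgebra
  have hscalar : exp (c • 1 : Matrix β β ℝ) = Real.exp c • 1 := by
    rw [Real.exp_eq_exp_ℝ, ← Algebra.algebraMap_eq_smul_one, ← Algebra.algebraMap_eq_smul_one]
    exact (algebraMap_exp_comm c).symm
  rw [exp_add_of_commute _ _ ((Commute.one_right M).smul_right c), hscalar, mul_smul_one]

theorem exp_eq_smul_exp_add_smul_one (M : Matrix β β ℝ) (c : ℝ) :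
    exp M = Real.exp (-c) • exp (M + c • 1) := by
  rw [exp_add_smul_one, smul_smul, ← Real.exp_add, neg_add_cancel, Real.exp_zero, one_smul]

theorem exists_add_smul_one_nonneg {Q : Matrix β β ℝ} (hQ : ∀ i j, i ≠ j → 0 ≤ Q i j) :
    ∃ c : ℝ, ∀ i j, 0 ≤ (Q + c • 1) i j := by
  refine ⟨∑ k, |Q k k|, fun i j => ?_⟩
  rcases eq_or_ne i j with rfl | hij
  · have hdiag : |Q i i| ≤ ∑ k, |Q k k| :=
      Finset.single_le_sum (fun k _ => abs_nonneg (Q k k)) (Finset.mem_univ i)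
    simp only [add_apply, smul_apply, one_apply_eq, smul_eq_mul, mul_one]
    linarith [neg_abs_le (Q i i)]
  · simpa [one_apply_ne hij] using hQ i j hij

theorem exp_submatrix_apply_le {Q : Matrix β β ℝ} (hQ : ∀ i j, i ≠ j → 0 ≤ Q i j)
    {f : α → β} (hf : Function.Injective f) (i j : α) :
    exp (Q.submatrix f f) i j ≤ exp Q (f i) (f j) := by
  obtain ⟨c, hc⟩ := exists_add_smul_one_nonneg hQ
  have hsub : Q.submatrix f f + c • 1 = (Q + c • 1).submatrix f f := by
    rw [← submatrix_one f hf]; rfl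
  rw [exp_eq_smul_exp_add_smul_one _ c, exp_eq_smul_exp_add_smul_one Q c, hsub, smul_apply,
    smul_apply]
  exact mul_le_mul_of_nonneg_left (exp_submatrix_apply_le_of_nonneg hc hf i j) (Real.exp_pos _).le

theorem exp_apply_nonneg {Q : Matrix β β ℝ} (hQ : ∀ i j, i ≠ j → 0 ≤ Q i j) (i j : β) :
    0 ≤ exp Q i j := by
  obtain ⟨c, hc⟩ := exists_add_smul_one_nonneg hQ
  rw [exp_eq_smul_exp_add_smul_one Q c, smul_apply, smul_eq_mul]
  exact mul_nonneg (Real.exp_pos _).le (exp_apply_nonneg_of_nonneg hc i j)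

theorem vecMul_exp_submatrix_le {Q : Matrix β β ℝ} (hQ : ∀ i j, i ≠ j → 0 ≤ Q i j)
    {f : α → β} (hf : Function.Injective f) {π : β → ℝ} (hπ : ∀ i, 0 ≤ π i) (j : α) :
    vecMul (π ∘ f) (exp (Q.submatrix f f)) j ≤ vecMul π (exp Q) (f j) :=
  calc ∑ a, π (f a) * exp (Q.submatrix f f) a j
      ≤ ∑ a, π (f a) * exp Q (f a) (f j) :=
        Finset.sum_le_sum fun a _ =>
          mul_le_mul_of_nonneg_left (exp_submatrix_apply_le hQ hf a j) (hπ _)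
    _ ≤ ∑ b, π b * exp Q b (f j) :=
        Finset.sum_comp_le_sum_of_injective hf fun b =>
          mul_nonneg (hπ b) (exp_apply_nonneg hQ b _)

end Matrix

theorem fsp_monotone_general
    {S : Type*} [Fintype S] [DecidableEq S]
    (Q : Matrix S S ℝ)
    (hQoff : ∀ s s', s ≠ s' → 0 ≤ Q s s')
    (π₀ : S → ℝ) (hπ₀nonneg : ∀ s, 0 ≤ π₀ s)
    (S₁ S₂ : Finset S) (h12 : S₁ ⊆ S₂)
    (t : ℝ) (ht : 0 ≤ t) (s : S) (hs : s ∈ S₁) :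
    Matrix.vecMul (fun a : {x : S // x ∈ S₁} => π₀ a)
        (NormedSpace.exp (t • Matrix.of fun a b : {x : S // x ∈ S₁} => Q a b))
        ⟨s, hs⟩ ≤
      Matrix.vecMul (fun a : {x : S // x ∈ S₂} => π₀ a)
        (NormedSpace.exp (t • Matrix.of fun a b : {x : S // x ∈ S₂} => Q a b))
        ⟨s, h12 hs⟩ ∧
    Matrix.vecMul (fun a : {x : S // x ∈ S₂} => π₀ a)
        (NormedSpace.exp (t • Matrix.of fun a b : {x : S // x ∈ S₂} => Q a b))
        ⟨s, h12 hs⟩ ≤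
      Matrix.vecMul π₀ (NormedSpace.exp (t • Q)) s := by
  have htQ : ∀ i j, i ≠ j → 0 ≤ (t • Q) i j := fun i j hij => mul_nonneg ht (hQoff i j hij)
  have htQ₂ : ∀ i j : {x : S // x ∈ S₂}, i ≠ j →
      0 ≤ (t • Q).submatrix Subtype.val Subtype.val i j :=
    fun i j hij => htQ i j (Subtype.val_injective.ne hij)
  exact ⟨vecMul_exp_submatrix_le htQ₂ (Set.inclusion_injective h12) (fun b => hπ₀nonneg b) ⟨s, hs⟩,
    vecMul_exp_submatrix_le htQ Subtype.val_injective hπ₀nonneg ⟨s, h12 hs⟩⟩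

/-- Finite state projection monotonicity: for nested subsets
`S₁ ⊆ S₂ ⊆ S`, the truncated transient probabilities at any time `t ≥ 0` and any
state `s ∈ S₁` are monotone in the truncation and never exceed the true transient
probability. -/
theorem fsp_monotone
    {S : Type*} [Fintype S] [DecidableEq S]
    (Q : Matrix S S ℝ)
    (hQoff : ∀ s s', s ≠ s' → 0 ≤ Q s s')
    (hQrow : ∀ s, ∑ s', Q s s' = 0)
    (π₀ : S → ℝ) (hπ₀nonneg : ∀ s, 0 ≤ π₀ s) (hπ₀sum : ∑ s, π₀ s = 1)
    (S₁ S₂ : Finset S) (h12 : S₁ ⊆ S₂)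
    (t : ℝ) (ht : 0 ≤ t) (s : S) (hs : s ∈ S₁) :
    Matrix.vecMul (fun a : {x : S // x ∈ S₁} => π₀ a)
        (NormedSpace.exp (t • Matrix.of fun a b : {x : S // x ∈ S₁} => Q a b))
        ⟨s, hs⟩ ≤
      Matrix.vecMul (fun a : {x : S // x ∈ S₂} => π₀ a)
        (NormedSpace.exp (t • Matrix.of fun a b : {x : S // x ∈ S₂} => Q a b))
        ⟨s, h12 hs⟩ ∧
    Matrix.vecMul (fun a : {x : S // x ∈ S₂} => π₀ a)
        (NormedSpace.exp (t • Matrix.of fun a b : {x : S // x ∈ S₂} => Q a b))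
        ⟨s, h12 hs⟩ ≤
      Matrix.vecMul π₀ (NormedSpace.exp (t • Q)) s :=
  fsp_monotone_general Q hQoff π₀ hπ₀nonneg S₁ S₂ h12 t ht s hs
end
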